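/- Let B ⊆ M_d(ℂ) be a unital subalgebra, s ∈ B a projection, and v a unitary with vⁿ = 1 such that [s,v]=0, sBs is commutative, and Ad v maps sBs onto itself. Setting r := s v s, one has rBr ⊆ r² B, and the linear span B + BrB + Br²B + ... + Br^{n-1}B is closed under multiplication (it is a subalgebra). -/

import Mathlib

/-!
Since `s` commutes with `v`, `r = v s` and `rⁿ = vⁿ sⁿ = sⁿ ∈ B`. Writing `r x r = v (s x s) v`
and moving the right-hand `v` across `s x s = v (s x' s) v⁻¹` (surjectivity of `Ad v` on `sBs`)
gives `r x r = v² (s x' s) = r² (s x' s)`.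
Iterating, `rᵏ b rʲ ∈ r^(k+j) B` for `k ≥ 1`, so the product of two generators `x rᵏ y` and
`x' rʲ y'` is again of that form with exponent `k + j`, which is brought below `n` by absorbing
`rⁿ` into `B`.
-/

section Monoid

variable {A S : Type*} [Monoid A] [SetLike S A] {B : S}

theorem exists_mem_mul_mul_eq_sq_mul [MulMemClass S A] {s v w : A} (hsB : s ∈ B)
    (hss : s * s = s) (hsv : Commute s v) (hwv : w * v = 1)
    (hAd' : ∀ y ∈ B, ∃ x ∈ B, v * (s * x * s) * w = s * y * s) {x : A} (hx : x ∈ B) :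
    ∃ y ∈ B, v * s * x * (v * s) = (v * s) ^ 2 * y := by
  obtain ⟨x', hx', hAdx⟩ := hAd' x hx
  refine ⟨s * x' * s, mul_mem (mul_mem hsB hx') hsB, ?_⟩
  calc v * s * x * (v * s) = v * (s * x * s) * v := by
        nth_rewrite 2 [← hsv.eq]; simp only [mul_assoc]
    _ = v * v * (s * x' * s) * (w * v) := by rw [← hAdx]; simp only [mul_assoc]
    _ = v ^ 2 * s ^ 2 * (s * x' * s) := by
        rw [hwv, mul_one, sq, sq s, mul_assoc (v * v) (s * s),
          show s * s * (s * x' * s) = s * x' * s by simp only [← mul_assoc, hss]]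
    _ = (v * s) ^ 2 * (s * x' * s) := by rw [hsv.symm.mul_pow]

theorem exists_mem_pow_mul_mul_pow_eq {r : A} (hrBr : ∀ x ∈ B, ∃ y ∈ B, r * x * r = r ^ 2 * y)
    {k : ℕ} (hk : 1 ≤ k) (j : ℕ) {b : A} (hb : b ∈ B) :
    ∃ c ∈ B, r ^ k * b * r ^ j = r ^ (k + j) * c := by
  induction j generalizing k b with
  | zero => exact ⟨b, hb, by simp⟩
  | succ j ih =>
    obtain ⟨k, rfl⟩ := Nat.exists_eq_add_of_le' hk
    obtain ⟨c, hc, hbc⟩ := hrBr b hb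
    obtain ⟨c', hc', hcc'⟩ := ih (k := k + 2) (by omega) hc
    refine ⟨c', hc', ?_⟩
    calc r ^ (k + 1) * b * r ^ (j + 1) = r ^ k * (r * b * r) * r ^ j := by
          rw [pow_succ r k, pow_succ' r j]; simp only [mul_assoc]
      _ = r ^ (k + 2) * c * r ^ j := by rw [hbc, pow_add]; simp only [mul_assoc]
      _ = r ^ (k + 1 + (j + 1)) * c' := by rw [hcc', show k + 2 + j = k + 1 + (j + 1) by omega]

variable [MulMemClass S A]

def bimodPowers (B : S) (r : A) (n : ℕ) : Set A :=
  {m | ∃ x ∈ B, ∃ y ∈ B, ∃ k < n, m = x * r ^ k * y}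

theorem mul_pow_mul_mem_bimodPowers {r : A} {n m : ℕ} (hrn : r ^ n ∈ B) (hm : m < n + n)
    {x y : A} (hx : x ∈ B) (hy : y ∈ B) : x * r ^ m * y ∈ bimodPowers B r n := by
  rcases lt_or_ge m n with hmn | hnm
  · exact ⟨x, hx, y, hy, m, hmn, rfl⟩
  · refine ⟨x, hx, r ^ n * y, mul_mem hrn hy, m - n, by omega, ?_⟩
    rw [← pow_sub_mul_pow r hnm]; simp only [mul_assoc]

theorem mul_mem_bimodPowers {r : A} {n : ℕ} (hrBr : ∀ x ∈ B, ∃ y ∈ B, r * x * r = r ^ 2 * y)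
    (hrn : r ^ n ∈ B) {a b : A} (ha : a ∈ bimodPowers B r n) (hb : b ∈ bimodPowers B r n) :
    a * b ∈ bimodPowers B r n := by
  obtain ⟨x, hx, y, hy, k, hk, rfl⟩ := ha
  obtain ⟨x', hx', y', hy', j, hj, rfl⟩ := hb
  rcases Nat.eq_zero_or_pos k with rfl | hk0
  · refine ⟨x * y * x', mul_mem (mul_mem hx hy) hx', y', hy', j, hj, ?_⟩
    simp only [pow_zero, mul_one, mul_assoc]
  · obtain ⟨c, hc, hyx'⟩ := exists_mem_pow_mul_mul_pow_eq hrBr hk0 j (mul_mem hy hx')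
    have hprod : x * r ^ k * y * (x' * r ^ j * y') = x * r ^ (k + j) * (c * y') := by
      conv_rhs => rw [mul_assoc, ← mul_assoc _ c, ← hyx']
      simp only [mul_assoc]
    exact hprod ▸ mul_pow_mul_mem_bimodPowers hrn (by omega) hx (mul_mem hc hy')

end Monoid

theorem Submodule.mul_mem_span_of_mul_mem {R A : Type*} [CommSemiring R] [Semiring A]
    [Algebra R A] {T : Set A} (hT : ∀ a ∈ T, ∀ b ∈ T, a * b ∈ T) {z w : A}
    (hz : z ∈ span R T) (hw : w ∈ span R T) : z * w ∈ span R T := by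
  have hzw := mul_mem_mul hz hw
  rw [span_mul_span] at hzw
  exact span_mono (Set.mul_subset_iff.2 hT) hzw

theorem stmt_6_general (d n : ℕ)
    (B : Subalgebra ℂ (Matrix (Fin d) (Fin d) ℂ))
    (s v : Matrix (Fin d) (Fin d) ℂ)
    (hsB : s ∈ B)
    (hs_proj : s * s = s ∧ star s = s)
    (hv_unitary : v * star v = 1 ∧ star v * v = 1)
    (hvn : v ^ n = 1)
    (hsv : s * v = v * s)
    (hAd' : ∀ y ∈ B, ∃ x ∈ B, v * (s * x * s) * star v = s * y * s)
    (r : Matrix (Fin d) (Fin d) ℂ) (hr : r = s * v * s) :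
    (∀ x ∈ B, ∃ y ∈ B, r * x * r = r ^ 2 * y) ∧
    (∀ z w : Matrix (Fin d) (Fin d) ℂ,
      z ∈ Submodule.span ℂ {m | ∃ x ∈ B, ∃ y ∈ B, ∃ k < n, m = x * r ^ k * y} →
      w ∈ Submodule.span ℂ {m | ∃ x ∈ B, ∃ y ∈ B, ∃ k < n, m = x * r ^ k * y} →
      z * w ∈ Submodule.span ℂ {m | ∃ x ∈ B, ∃ y ∈ B, ∃ k < n, m = x * r ^ k * y}) := by
  have hrv : r = v * s := by rw [hr, hsv, mul_assoc, hs_proj.1]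
  have hrBr : ∀ x ∈ B, ∃ y ∈ B, r * x * r = r ^ 2 * y := fun x hx => hrv ▸
    exists_mem_mul_mul_eq_sq_mul hsB hs_proj.1 hsv hv_unitary.2 hAd' hx
  have hrn : r ^ n ∈ B := by
    rw [hrv, Commute.mul_pow hsv.symm, hvn, one_mul]
    exact pow_mem hsB n
  exact ⟨hrBr, fun z w => Submodule.mul_mem_span_of_mul_mem fun a ha b hb =>
    mul_mem_bimodPowers hrBr hrn ha hb⟩

/-- with `B ⊆ M_d(ℂ)` a unital subalgebra, `s ∈ B` a projection, `v` a
unitary with `vⁿ = 1`, `[s,v] = 0`, `sBs` commutative and `Ad v` mapping `sBs` onto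
itself, and `r := s v s`: one has `rBr ⊆ r²B`, and the linear span
`B + BrB + Br²B + ⋯ + Br^{n-1}B` is closed under multiplication. -/
theorem stmt_6 (d n : ℕ) (hn : 0 < n)
    (B : Subalgebra ℂ (Matrix (Fin d) (Fin d) ℂ))
    (s v : Matrix (Fin d) (Fin d) ℂ)
    (hsB : s ∈ B)
    (hs_proj : s * s = s ∧ star s = s)
    (hv_unitary : v * star v = 1 ∧ star v * v = 1)
    (hvn : v ^ n = 1)
    (hsv : s * v = v * s)
    (habelian : ∀ x ∈ B, ∀ y ∈ B, (s * x * s) * (s * y * s) = (s * y * s) * (s * x * s))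
    (hAd : ∀ x ∈ B, ∃ y ∈ B, v * (s * x * s) * star v = s * y * s)
    (hAd' : ∀ y ∈ B, ∃ x ∈ B, v * (s * x * s) * star v = s * y * s)
    (r : Matrix (Fin d) (Fin d) ℂ) (hr : r = s * v * s) :
    (∀ x ∈ B, ∃ y ∈ B, r * x * r = r ^ 2 * y) ∧
    (∀ z w : Matrix (Fin d) (Fin d) ℂ,
      z ∈ Submodule.span ℂ {m | ∃ x ∈ B, ∃ y ∈ B, ∃ k < n, m = x * r ^ k * y} →
      w ∈ Submodule.span ℂ {m | ∃ x ∈ B, ∃ y ∈ B, ∃ k < n, m = x * r ^ k * y} →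
      z * w ∈ Submodule.span ℂ {m | ∃ x ∈ B, ∃ y ∈ B, ∃ k < n, m = x * r ^ k * y}) :=
  stmt_6_general d n B s v hsB hs_proj hv_unitary hvn hsv hAd' r hr
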